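/- arXiv:2603.23147 — 3 statements merged into one kernel-verified Lean document; each statement's English description precedes it below -/
import Mathlib

section
/- Fix N ≥ 1 and an N-periodic family of real matrices A_k ∈ ℝ^{n×n}, B_k ∈ ℝ^{n×m}, C_k ∈ ℝ^{m×n}, D_k ∈ ℝ^{m×m}, with every D_k invertible, and cycled matrices Ǎ, B̌, Č, Ď. Define Γ_k := A_k − B_k D_k⁻¹ C_k and Φ_inv := Γ_{N−1} Γ_{N−2} ··· Γ_0. Then ρ(Φ_inv) < 1 if and only if every complex number z₀ satisfying det [[z₀·I_{Nn} − Ǎ, −B̌], [Č, Ď]] = 0 has |z₀| < 1. -/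
open Matrix
open scoped ENNReal NNReal

/-- Spectral radius of a real square matrix: the spectral radius (max |λ| over complex
eigenvalues) of the matrix viewed as a complex matrix. -/
noncomputable def specRad {ι : Type} [Fintype ι] [DecidableEq ι] (M : Matrix ι ι ℝ) : ℝ≥0∞ :=
  spectralRadius ℂ (M.map Complex.ofReal)

/-- The cycled (1-shift block-circulant) matrix: the (i,j) block equals `M j` if
`i = (j+1) mod N` and `0` otherwise. -/
def cyc (N : ℕ) {n m : ℕ} (M : ℕ → Matrix (Fin n) (Fin m) ℝ) :
    Matrix (Fin N × Fin n) (Fin N × Fin m) ℝ :=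
  fun p q => if (p.1 : ℕ) = ((q.1 : ℕ) + 1) % N then M (q.1 : ℕ) p.2 q.2 else 0

/-- Block-diagonal matrix `diag (M 0, …, M (N-1))`. -/
def bdiag (N : ℕ) {p n : ℕ} (M : ℕ → Matrix (Fin p) (Fin n) ℝ) :
    Matrix (Fin N × Fin p) (Fin N × Fin n) ℝ :=
  fun q r => if q.1 = r.1 then M (q.1 : ℕ) q.2 r.2 else 0

/-- The descending product `A (N-1) * A (N-2) * ⋯ * A 0` (monodromy-type product). -/
def prodDesc {n : ℕ} (A : ℕ → Matrix (Fin n) (Fin n) ℝ) (N : ℕ) : Matrix (Fin n) (Fin n) ℝ :=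
  ((List.range N).reverse.map A).prod

/-- State transition product `Φ(j,i) = A (j-1) * ⋯ * A i` for `j > i`, and `Φ(i,i) = 1`. -/
def stp {n : ℕ} (A : ℕ → Matrix (Fin n) (Fin n) ℝ) (j i : ℕ) : Matrix (Fin n) (Fin n) ℝ :=
  ((List.range' i (j - i)).reverse.map A).prod

/-- Periodic Markov parameter `M_k^{(j)} = C (k+j) * Φ(k+j, k+1) * B k`. -/
def markov {n m p : ℕ} (A : ℕ → Matrix (Fin n) (Fin n) ℝ) (B : ℕ → Matrix (Fin n) (Fin m) ℝ)
    (C : ℕ → Matrix (Fin p) (Fin n) ℝ) (k j : ℕ) : Matrix (Fin p) (Fin m) ℝ :=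
  C (k + j) * stp A (k + j) (k + 1) * B k

/-- Kronecker product `e_i ⊗ w` of the `(i+1)`-th standard unit vector of `ℝ^N` with `w`. -/
def kron {N q : ℕ} (i : Fin N) (w : Fin q → ℝ) : Fin N × Fin q → ℝ :=
  fun p => if p.1 = i then w p.2 else 0

/-- The residue `k mod N` as an element of `Fin N`. -/
def finMod (N : ℕ) (hN : 0 < N) (k : ℕ) : Fin N := ⟨k % N, Nat.mod_lt _ hN⟩

/-!
Eliminating the block `Ď` (a Schur complement) turns the determinant into
`det Ď · det (z₀ I - Γ̌)`, where `Γ̌ = Ǎ - B̌ Ď⁻¹ Č` is the cycled matrix of the `Γ_k`.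
An eigenvector of a cycled matrix is a sequence of blocks with `Γ_k v_k = z v_{k+1}`,
indices mod `N`; following it once around the cycle gives `Φ_inv v_0 = z^N v_0`, and
conversely `v_k = z^{-k} Γ_{k-1} ⋯ Γ_0 w` lifts an eigenvector `w` of `Φ_inv`. Hence `z` is an
eigenvalue of `Γ̌` iff `z^N` is one of `Φ_inv` (for `z = 0` both say that some `Γ_k` is
singular). As every complex number is an `N`-th power and `|z|^N < 1 ↔ |z| < 1`, the two
stability conditions agree.
-/

section Monodromy

variable {M : Type*} [Monoid M]

def monodromy (G : ℕ → M) (N : ℕ) : M :=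
  ((List.range N).reverse.map G).prod

@[simp]
lemma monodromy_zero (G : ℕ → M) : monodromy G 0 = 1 := rfl

lemma monodromy_succ (G : ℕ → M) (N : ℕ) : monodromy G (N + 1) = G N * monodromy G N := by
  simp [monodromy, List.range_succ]

lemma map_monodromy {M' F : Type*} [Monoid M'] [FunLike F M M'] [MonoidHomClass F M M'] (f : F)
    (G : ℕ → M) (N : ℕ) : f (monodromy G N) = monodromy (fun k => f (G k)) N := by
  simp [monodromy, map_list_prod, Function.comp_def]

lemma det_monodromy {R ι : Type*} [CommRing R] [Fintype ι] [DecidableEq ι]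
    (G : ℕ → Matrix ι ι R) (N : ℕ) : (monodromy G N).det = ∏ k ∈ Finset.range N, (G k).det := by
  induction N with
  | zero => simp
  | succ N ih => rw [monodromy_succ, det_mul, ih, Finset.prod_range_succ, mul_comm]

end Monodromy

section MonodromyMulVec

variable {K ι : Type*} [Fintype ι] [DecidableEq ι]

lemma monodromy_mulVec_of_chain [CommSemiring K] {G : ℕ → Matrix ι ι K} {V : ℕ → ι → K} {z : K}
    {N : ℕ} (h : ∀ i < N, G i *ᵥ V i = z • V (i + 1)) :
    ∀ i ≤ N, monodromy G i *ᵥ V 0 = z ^ i • V i := by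
  intro i hi
  induction i with
  | zero => simp
  | succ i ih =>
    rw [monodromy_succ, ← mulVec_mulVec, ih (by omega), mulVec_smul, h i (by omega), smul_smul,
      pow_succ]

lemma chain_of_monodromy [Field K] (G : ℕ → Matrix ι ι K) (w : ι → K) {z : K}
    (hz : z ≠ 0) (i : ℕ) :
    G i *ᵥ (z⁻¹ ^ i • monodromy G i *ᵥ w) = z • z⁻¹ ^ (i + 1) • monodromy G (i + 1) *ᵥ w := by
  rw [mulVec_smul, monodromy_succ, ← mulVec_mulVec, smul_smul, pow_succ,
    mul_comm (z⁻¹ ^ i), mul_inv_cancel_left₀ hz]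

end MonodromyMulVec

section Spectrum

variable {K ι : Type*} [Field K] [Fintype ι] [DecidableEq ι]

lemma Matrix.mem_spectrum_iff_det_smul_one_sub_eq_zero (M : Matrix ι ι K) (z : K) :
    z ∈ spectrum K M ↔ (z • (1 : Matrix ι ι K) - M).det = 0 := by
  rw [spectrum.mem_iff, Algebra.algebraMap_eq_smul_one, isUnit_iff_isUnit_det, isUnit_iff_ne_zero,
    not_not]

lemma Matrix.mem_spectrum_iff_exists_mulVec_eq_smul (M : Matrix ι ι K) (z : K) :
    z ∈ spectrum K M ↔ ∃ v ≠ 0, M *ᵥ v = z • v := by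
  rw [mem_spectrum_iff_det_smul_one_sub_eq_zero, ← exists_mulVec_eq_zero_iff]
  simp only [sub_mulVec, smul_mulVec, one_mulVec, sub_eq_zero, eq_comm (a := z • _)]

lemma Matrix.zero_mem_spectrum_iff_det_eq_zero (M : Matrix ι ι K) :
    0 ∈ spectrum K M ↔ M.det = 0 := by
  simp [mem_spectrum_iff_det_smul_one_sub_eq_zero, det_neg]

end Spectrum

lemma Matrix.map_nonsing_inv {R S ι : Type*} [CommRing R] [CommRing S] [Fintype ι] [DecidableEq ι]
    (f : R →+* S) {M : Matrix ι ι R} (hM : IsUnit M.det) : M⁻¹.map f = (M.map f)⁻¹ := by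
  refine (inv_eq_left_inv ?_).symm
  rw [← f.mapMatrix_apply, ← f.mapMatrix_apply, ← map_mul, nonsing_inv_mul _ hM, map_one]

lemma Matrix.det_fromBlocks_smul_one_sub_map {R S ι κ : Type*} [CommRing R] [CommRing S]
    [Fintype ι] [DecidableEq ι] [Fintype κ] [DecidableEq κ] (f : R →+* S) (A : Matrix ι ι R)
    (B : Matrix ι κ R) (C : Matrix κ ι R) {D : Matrix κ κ R} (hD : IsUnit D.det) (z : S) :
    (fromBlocks (z • 1 - A.map f) (-B.map f) (C.map f) (D.map f)).det =
      (D.map f).det * (z • 1 - (A - B * D⁻¹ * C).map f).det := by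
  have hDf : IsUnit (D.map f).det := by
    rw [← f.mapMatrix_apply, ← RingHom.map_det]
    exact hD.map f
  let := invertibleOfIsUnitDet _ hDf
  rw [det_fromBlocks₂₂, invOf_eq_nonsing_inv, ← map_nonsing_inv f hD]
  congr 2
  rw [Matrix.map_sub _ (map_sub f), Matrix.map_mul, Matrix.map_mul, Matrix.neg_mul, Matrix.neg_mul]
  abel

lemma spectralRadius_lt_one_iff_of_finite {𝕜 A : Type*} [NormedField 𝕜] [Ring A] [Algebra 𝕜 A]
    {a : A} (h : (spectrum 𝕜 a).Finite) :
    spectralRadius 𝕜 a < 1 ↔ ∀ k ∈ spectrum 𝕜 a, ‖k‖ < 1 := by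
  lift spectrum 𝕜 a to Finset 𝕜 using h with s hs
  rw [spectralRadius, ← hs]
  simp only [Finset.mem_coe]
  rw [← Finset.sup_eq_iSup, Finset.sup_lt_iff (by simp)]
  simp [← ENNReal.coe_one, ENNReal.coe_lt_coe, ← NNReal.coe_lt_coe]

lemma forall_norm_lt_one_iff_forall_pow_mem {K : Type*} [NormedField K] [IsAlgClosed K] {N : ℕ}
    (hN : N ≠ 0) (S : Set K) : (∀ w ∈ S, ‖w‖ < 1) ↔ ∀ z, z ^ N ∈ S → ‖z‖ < 1 := by
  have key : ∀ z : K, ‖z ^ N‖ < 1 ↔ ‖z‖ < 1 := fun z => by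
    rw [norm_pow, pow_lt_one_iff_of_nonneg (norm_nonneg z) hN]
  refine ⟨fun h z hz => (key z).1 (h _ hz), fun h w hw => ?_⟩
  obtain ⟨z, rfl⟩ := IsAlgClosed.exists_pow_nat_eq w (Nat.pos_of_ne_zero hN)
  exact (key z).2 (h z hw)

section BlockCycle

open Fin.NatCast

variable {R ι κ : Type*}

def blockCycle [Zero R] (N : ℕ) (M : ℕ → Matrix ι κ R) : Matrix (Fin N × ι) (Fin N × κ) R :=
  fun p q => if (p.1 : ℕ) = ((q.1 : ℕ) + 1) % N then M q.1 p.2 q.2 else 0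

lemma map_cyc [Zero R] (N : ℕ) {n m : ℕ} (M : ℕ → Matrix (Fin n) (Fin m) ℝ) {f : ℝ → R}
    (hf : f 0 = 0) : (cyc N M).map f = blockCycle N fun k => (M k).map f := by
  ext p q
  simp only [cyc, blockCycle, map_apply, apply_ite f, hf]

variable {N : ℕ} [NeZero N]

-- The block index `i` is read modulo `N`.
def blockAt (v : Fin N × ι → R) (i : ℕ) : ι → R := fun c => v (i, c)

def ofBlocks (V : ℕ → ι → R) : Fin N × ι → R := fun p => V p.1 p.2

@[simp]
lemma blockAt_zero [Zero R] (i : ℕ) : blockAt (0 : Fin N × ι → R) i = 0 := rfl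

@[simp]
lemma blockAt_ofBlocks (V : ℕ → ι → R) (i : ℕ) :
    blockAt (ofBlocks (N := N) V) i = V (i % N) := by
  ext c
  simp [blockAt, ofBlocks, Fin.val_natCast]

lemma eq_zero_of_blockAt_eq_zero [Zero R] {v : Fin N × ι → R} (h : ∀ i < N, blockAt v i = 0) :
    v = 0 := by
  ext ⟨j, c⟩
  simpa [blockAt] using congrFun (h j j.isLt) c

variable {K : Type*} [CommSemiring K] [Fintype ι]

lemma blockCycle_mulVec_natCast_succ (G : ℕ → Matrix ι ι K) (v : Fin N × ι → K) {i : ℕ}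
    (hi : i < N) (c : ι) :
    (blockCycle N G *ᵥ v) (((i + 1 : ℕ) : Fin N), c) = (G i *ᵥ blockAt v i) c := by
  have hcond (j : Fin N) : (i + 1) % N = ((j : ℕ) + 1) % N ↔ j = i := by
    rw [Fin.ext_iff, Fin.val_cast_of_lt hi]
    refine ⟨fun h => ?_, fun h => by rw [h]⟩
    have h' : i % N = (j : ℕ) % N := Nat.ModEq.add_right_cancel' 1 h
    rwa [Nat.mod_eq_of_lt hi, Nat.mod_eq_of_lt j.isLt, eq_comm] at h'
  simp only [mulVec, dotProduct, blockCycle, Fintype.sum_prod_type, Fin.val_natCast, hcond]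
  simp [Fin.val_cast_of_lt hi, blockAt]

lemma blockCycle_mulVec_eq_smul_iff (G : ℕ → Matrix ι ι K) (v : Fin N × ι → K) (z : K) :
    blockCycle N G *ᵥ v = z • v ↔ ∀ i < N, G i *ᵥ blockAt v i = z • blockAt v (i + 1) := by
  constructor
  · intro h i hi
    ext c
    rw [← blockCycle_mulVec_natCast_succ G v hi, h]
    rfl
  · intro h
    ext ⟨j, c⟩
    obtain ⟨i, hi, rfl⟩ : ∃ i < N, ((i + 1 : ℕ) : Fin N) = j :=
      ⟨(j - 1 : Fin N), (j - 1).isLt, by simp⟩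
    rw [blockCycle_mulVec_natCast_succ G v hi, h i hi]
    rfl

end BlockCycle

section BlockCycleSpectrum

variable {K ι : Type*} [Field K] [Fintype ι] [DecidableEq ι] {N : ℕ} [NeZero N]

lemma det_blockCycle_eq_zero_iff (G : ℕ → Matrix ι ι K) :
    (blockCycle N G).det = 0 ↔ ∃ i < N, (G i).det = 0 := by
  have hker (v : Fin N × ι → K) : blockCycle N G *ᵥ v = 0 ↔ ∀ i < N, G i *ᵥ blockAt v i = 0 := by
    simpa using blockCycle_mulVec_eq_smul_iff G v 0
  simp_rw [← exists_mulVec_eq_zero_iff, hker]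
  constructor
  · rintro ⟨v, hv, hG⟩
    obtain ⟨i, hi, hvi⟩ : ∃ i < N, blockAt v i ≠ 0 := by
      by_contra! h
      exact hv (eq_zero_of_blockAt_eq_zero h)
    exact ⟨i, hi, blockAt v i, hvi, hG i hi⟩
  · rintro ⟨i, hi, w, hw, hGw⟩
    refine ⟨ofBlocks fun j => if j = i then w else 0, fun h => hw ?_, fun j hj => ?_⟩
    · simpa [Nat.mod_eq_of_lt hi] using congrArg (blockAt · i) h
    · rw [blockAt_ofBlocks, Nat.mod_eq_of_lt hj]
      split_ifs with hji
      · rwa [hji]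
      · exact mulVec_zero _

theorem mem_spectrum_blockCycle_iff (G : ℕ → Matrix ι ι K) (z : K) :
    z ∈ spectrum K (blockCycle N G) ↔ z ^ N ∈ spectrum K (monodromy G N) := by
  rcases eq_or_ne z 0 with rfl | hz
  · rw [zero_pow (NeZero.ne N), zero_mem_spectrum_iff_det_eq_zero,
      zero_mem_spectrum_iff_det_eq_zero, det_blockCycle_eq_zero_iff, det_monodromy,
      Finset.prod_eq_zero_iff]
    simp
  simp only [mem_spectrum_iff_exists_mulVec_eq_smul, blockCycle_mulVec_eq_smul_iff]
  constructor
  · rintro ⟨v, hv, hchain⟩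
    have hmono := monodromy_mulVec_of_chain hchain
    refine ⟨blockAt v 0, fun h0 => hv (eq_zero_of_blockAt_eq_zero fun i hi => ?_), ?_⟩
    · simpa [h0, hz] using (hmono i hi.le).symm
    · have hperiodic : blockAt v N = blockAt v 0 := funext fun c => by simp [blockAt]
      rw [hmono N le_rfl, hperiodic]
  · rintro ⟨w, hw, hwN⟩
    set V : ℕ → ι → K := fun i => z⁻¹ ^ i • monodromy G i *ᵥ w
    have hV : ∀ i ≤ N, V (i % N) = V i := by
      intro i hi
      rcases hi.lt_or_eq with hi | rfl
      · rw [Nat.mod_eq_of_lt hi]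
      · simp [V, hwN, smul_smul, hz]
    refine ⟨ofBlocks V, fun h => hw ?_, fun i hi => ?_⟩
    · simpa [V] using congrArg (blockAt · 0) h
    · rw [blockAt_ofBlocks, blockAt_ofBlocks, hV i hi.le, hV (i + 1) hi]
      exact chain_of_monodromy G w hz i

end BlockCycleSpectrum

section CycledSystem

variable {N : ℕ}

lemma bdiag_mul_bdiag {p n q : ℕ} (M : ℕ → Matrix (Fin p) (Fin n) ℝ)
    (E : ℕ → Matrix (Fin n) (Fin q) ℝ) : bdiag N M * bdiag N E = bdiag N fun k => M k * E k := by
  ext i j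
  simp only [mul_apply, bdiag, Fintype.sum_prod_type]
  rw [Finset.sum_eq_single i.1 (fun b _ hb => by simp [Ne.symm hb]) (by simp)]
  by_cases h : i.1 = j.1 <;> simp [h]

lemma bdiag_one {n : ℕ} : bdiag N (fun _ => (1 : Matrix (Fin n) (Fin n) ℝ)) = 1 := by
  ext ⟨i, c⟩ ⟨j, d⟩
  by_cases hij : i = j <;> simp [bdiag, one_apply, hij]

lemma cyc_mul_bdiag {p n q : ℕ} (M : ℕ → Matrix (Fin p) (Fin n) ℝ)
    (E : ℕ → Matrix (Fin n) (Fin q) ℝ) : cyc N M * bdiag N E = cyc N fun k => M k * E k := by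
  ext i j
  simp only [mul_apply, cyc, bdiag, Fintype.sum_prod_type]
  rw [Finset.sum_eq_single j.1 (fun b _ hb => by simp [hb]) (by simp)]
  by_cases h : (i.1 : ℕ) = ((j.1 : ℕ) + 1) % N <;> simp [h]

lemma cyc_sub {n m : ℕ} (M M' : ℕ → Matrix (Fin n) (Fin m) ℝ) :
    cyc N M - cyc N M' = cyc N fun k => M k - M' k := by
  ext i j
  by_cases h : (i.1 : ℕ) = ((j.1 : ℕ) + 1) % N <;> simp [cyc, h]

lemma bdiag_mul_bdiag_inv {m : ℕ} {D : ℕ → Matrix (Fin m) (Fin m) ℝ}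
    (hD : ∀ k, IsUnit (D k).det) : bdiag N D * bdiag N (fun k => (D k)⁻¹) = 1 := by
  simp [bdiag_mul_bdiag, mul_nonsing_inv _ (hD _), bdiag_one]

lemma cyc_sub_cyc_mul_inv_bdiag_mul_bdiag {n m : ℕ} (A : ℕ → Matrix (Fin n) (Fin n) ℝ)
    (B : ℕ → Matrix (Fin n) (Fin m) ℝ) (C : ℕ → Matrix (Fin m) (Fin n) ℝ)
    {D : ℕ → Matrix (Fin m) (Fin m) ℝ} (hD : ∀ k, IsUnit (D k).det) :
    cyc N A - cyc N B * (bdiag N D)⁻¹ * bdiag N C = cyc N fun k => A k - B k * (D k)⁻¹ * C k := by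
  rw [inv_eq_right_inv (bdiag_mul_bdiag_inv hD), cyc_mul_bdiag, cyc_mul_bdiag, cyc_sub]

end CycledSystem

lemma map_prodDesc {S : Type*} [Ring S] (f : ℝ →+* S) {n : ℕ} (A : ℕ → Matrix (Fin n) (Fin n) ℝ)
    (N : ℕ) : (prodDesc A N).map f = monodromy (fun k => (A k).map f) N :=
  map_monodromy f.mapMatrix A N

/-- Stability of the periodic inverse is equivalent to the periodic
minimum phase condition: `ρ(Φ_inv) < 1` iff every root `z₀` of the determinant of the
cycled system matrix `[[z₀ I - Ǎ, -B̌], [Č, Ď]]` satisfies `|z₀| < 1`. -/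
theorem specRad_monodromy_iff_minphase {n m N : ℕ} (hN : 1 ≤ N)
    (A : ℕ → Matrix (Fin n) (Fin n) ℝ) (B : ℕ → Matrix (Fin n) (Fin m) ℝ)
    (C : ℕ → Matrix (Fin m) (Fin n) ℝ) (D : ℕ → Matrix (Fin m) (Fin m) ℝ)
    (hDinv : ∀ k, IsUnit (D k).det) :
    specRad (prodDesc (fun k => A k - B k * (D k)⁻¹ * C k) N) < 1 ↔
      ∀ z₀ : ℂ,
        (Matrix.fromBlocks
            (z₀ • (1 : Matrix (Fin N × Fin n) (Fin N × Fin n) ℂ) -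
              (cyc N A).map Complex.ofReal)
            (-((cyc N B).map Complex.ofReal))
            ((bdiag N C).map Complex.ofReal)
            ((bdiag N D).map Complex.ofReal)).det = 0 →
          ‖z₀‖ < 1 := by
  have : NeZero N := ⟨by omega⟩
  have hD : IsUnit (bdiag N D).det := isUnit_det_of_right_inverse (bdiag_mul_bdiag_inv hDinv)
  have hDC : ((bdiag N D).map Complex.ofRealHom).det ≠ 0 := by
    rw [← RingHom.mapMatrix_apply, ← RingHom.map_det]
    exact (hD.map _).ne_zero
  have hofReal : (Complex.ofReal : ℝ → ℂ) = Complex.ofRealHom := rfl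
  rw [specRad, spectralRadius_lt_one_iff_of_finite (finite_spectrum _),
    forall_norm_lt_one_iff_forall_pow_mem (NeZero.ne N)]
  refine forall_congr' fun z => imp_congr_left ?_
  rw [hofReal, det_fromBlocks_smul_one_sub_map _ _ _ _ hD, mul_eq_zero, or_iff_right hDC,
    ← mem_spectrum_iff_det_smul_one_sub_eq_zero, cyc_sub_cyc_mul_inv_bdiag_mul_bdiag _ _ _ hDinv,
    map_cyc _ _ (map_zero _), mem_spectrum_blockCycle_iff, map_prodDesc]
end

section
/- Fix N ≥ 1, r ≥ 1, and an N-periodic family of real matrices A_k ∈ ℝ^{n×n}, B_k ∈ ℝ^{n×m}, C_k ∈ ℝ^{m×n}, with cycled matrices Ǎ, B̌, Č. Define Φ(j,i) := A_{j−1}···A_i for j > i, Φ(i,i) := I, and M_k^{(j)} := C_{k+j} Φ(k+j, k+1) B_k for j ≥ 1 (indices mod N). Assume M_k^{(j)} = 0 for all k and all j with 1 ≤ j ≤ r−1, and that M_k^{(r)} is invertible for every k (so that Č Ǎ^{r−1} B̌ is invertible). Define Γ_k := A_k − B_k (M_k^{(r)})⁻¹ C_{k+r} Φ(k+r, k). Then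 Ǎ − B̌ (Č Ǎ^{r−1} B̌)⁻¹ Č Ǎ^r equals the Nn×Nn block matrix whose (i,j) block equals Γ_j if i = (j+1) mod N and 0 otherwise. -/
open Matrix
open scoped ENNReal NNReal

def shiftM (N s : ℕ) {p q : ℕ} (M : ℕ → Matrix (Fin p) (Fin q) ℝ) :
    Matrix (Fin N × Fin p) (Fin N × Fin q) ℝ :=
  fun a b => if (a.1 : ℕ) = ((b.1 : ℕ) + s) % N then M (b.1 : ℕ) a.2 b.2 else 0

def coShiftM (N s : ℕ) {p q : ℕ} (M : ℕ → Matrix (Fin p) (Fin q) ℝ) :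
    Matrix (Fin N × Fin p) (Fin N × Fin q) ℝ :=
  fun a b => if (b.1 : ℕ) = ((a.1 : ℕ) + s) % N then M (a.1 : ℕ) a.2 b.2 else 0

lemma mod_add_mod'' (a b n : ℕ) : (a % n + b) % n = (a + b) % n := by
  rw [Nat.add_mod, Nat.mod_mod_of_dvd _ dvd_rfl, ← Nat.add_mod]

lemma shiftM_congr {N s p q : ℕ} (M M' : ℕ → Matrix (Fin p) (Fin q) ℝ)
    (h : ∀ j, j < N → M j = M' j) : shiftM N s M = shiftM N s M' := by
  ext a b
  simp only [shiftM, h (b.1 : ℕ) b.1.isLt]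

lemma shiftM_one {N p : ℕ} :
    shiftM N 0 (fun _ => (1 : Matrix (Fin p) (Fin p) ℝ)) = 1 := by
  ext a b
  simp only [shiftM, Nat.add_zero, Nat.mod_eq_of_lt b.1.isLt, Matrix.one_apply,
    Prod.ext_iff, Fin.ext_iff]
  split_ifs <;> simp_all

lemma shiftM_sub {N s p q : ℕ} (M₁ M₂ : ℕ → Matrix (Fin p) (Fin q) ℝ) :
    shiftM N s M₁ - shiftM N s M₂ = shiftM N s (fun j => M₁ j - M₂ j) := by
  ext a b
  simp only [Matrix.sub_apply, shiftM]
  split_ifs <;> simp [Matrix.sub_apply]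

lemma shiftM_mul {N p q l : ℕ} (hN : 0 < N) (s t : ℕ)
    (M₁ : ℕ → Matrix (Fin p) (Fin q) ℝ) (M₂ : ℕ → Matrix (Fin q) (Fin l) ℝ)
    (h₁ : ∀ k, M₁ k = M₁ (k % N)) :
    shiftM N s M₁ * shiftM N t M₂ = shiftM N (s + t) (fun j => M₁ (j + t) * M₂ j) := by
  ext a b
  rw [Matrix.mul_apply, Fintype.sum_prod_type]
  rw [Finset.sum_eq_single (⟨((b.1 : ℕ) + t) % N, Nat.mod_lt _ hN⟩ : Fin N)]
  · have hmod : (((b.1 : ℕ) + t) % N + s) % N = ((b.1 : ℕ) + (s + t)) % N := by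
      rw [mod_add_mod'']; congr 1; ring
    simp only [shiftM, Fin.val_mk, eq_self_iff_true, if_true, hmod]
    split_ifs with h
    · rw [Matrix.mul_apply, h₁ ((b.1 : ℕ) + t)]
    · simp
  · intro c _ hc
    have : (c : ℕ) ≠ ((b.1 : ℕ) + t) % N := fun h => hc (Fin.ext h)
    simp [shiftM, this]
  · simp

lemma coShiftM_mul_shiftM {N p q l : ℕ} (hN : 0 < N) (s : ℕ)
    (M₁ : ℕ → Matrix (Fin p) (Fin q) ℝ) (M₂ : ℕ → Matrix (Fin q) (Fin l) ℝ) :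
    coShiftM N s M₁ * shiftM N s M₂ = shiftM N 0 (fun j => M₁ j * M₂ j) := by
  ext a b
  rw [Matrix.mul_apply, Fintype.sum_prod_type]
  rw [Finset.sum_eq_single (⟨((a.1 : ℕ) + s) % N, Nat.mod_lt _ hN⟩ : Fin N)]
  · have hiff : (((a.1 : ℕ) + s) % N = ((b.1 : ℕ) + s) % N) ↔
        ((a.1 : ℕ) = ((b.1 : ℕ) + 0) % N) := by
      rw [Nat.add_zero, Nat.mod_eq_of_lt b.1.isLt]
      constructor
      · intro h
        have h2 : (a.1 : ℕ) % N = (b.1 : ℕ) % N := Nat.ModEq.add_right_cancel' s h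
        rwa [Nat.mod_eq_of_lt a.1.isLt, Nat.mod_eq_of_lt b.1.isLt] at h2
      · intro h; rw [h]
    simp only [coShiftM, shiftM, Fin.val_mk, eq_self_iff_true, if_true, hiff]
    split_ifs with h
    · have hab : (a.1 : ℕ) = (b.1 : ℕ) := by
        rwa [Nat.add_zero, Nat.mod_eq_of_lt b.1.isLt] at h
      rw [hab, Matrix.mul_apply]
    · simp
  · intro c _ hc
    have : (c : ℕ) ≠ ((a.1 : ℕ) + s) % N := fun h => hc (Fin.ext h)
    simp [coShiftM, this]
  · simp

lemma stp_refl {n : ℕ} (A : ℕ → Matrix (Fin n) (Fin n) ℝ) (j : ℕ) : stp A j j = 1 := by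
  simp [stp]

lemma stp_succ_right {n : ℕ} (A : ℕ → Matrix (Fin n) (Fin n) ℝ) (j s : ℕ) :
    stp A (j + s + 1) j = stp A (j + s + 1) (j + 1) * A j := by
  have h1 : j + s + 1 - j = s + 1 := by omega
  have h2 : j + s + 1 - (j + 1) = s := by omega
  rw [stp, stp, h1, h2, List.range'_succ, List.reverse_cons, List.map_append, List.prod_append]
  simp

lemma stp_succ_left {n : ℕ} (A : ℕ → Matrix (Fin n) (Fin n) ℝ) (j s : ℕ) :
    stp A (j + s + 1) j = A (j + s) * stp A (j + s) j := by
  have h1 : j + s + 1 - j = s + 1 := by omega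
  have h2 : j + s - j = s := by omega
  rw [stp, stp, h1, h2, List.range'_concat, List.reverse_append, List.map_append,
    List.prod_append]
  simp

lemma stp_mod {n N : ℕ} (hN : 0 < N) (A : ℕ → Matrix (Fin n) (Fin n) ℝ)
    (hA : ∀ k, A k = A (k % N)) (s : ℕ) :
    ∀ j, stp A (j + s) j = stp A (j % N + s) (j % N) := by
  induction s with
  | zero => intro j; simp [stp_refl]
  | succ s ih =>
    intro j
    rw [show j + (s + 1) = j + s + 1 from rfl, stp_succ_left,
      show j % N + (s + 1) = j % N + s + 1 from rfl, stp_succ_left, ih j]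
    congr 1
    rw [hA (j + s), hA (j % N + s), mod_add_mod'']

lemma stp_shift_mod {n N : ℕ} (hN : 0 < N) (A : ℕ → Matrix (Fin n) (Fin n) ℝ)
    (hA : ∀ k, A k = A (k % N)) (s a b : ℕ) (h : a % N = b % N) :
    stp A (a + s) a = stp A (b + s) b := by
  rw [stp_mod hN A hA s a, stp_mod hN A hA s b, h]

lemma cyc_pow {n N : ℕ} (hN : 0 < N) (A : ℕ → Matrix (Fin n) (Fin n) ℝ)
    (hA : ∀ k, A k = A (k % N)) (s : ℕ) :
    shiftM N 1 A ^ s = shiftM N s (fun j => stp A (j + s) j) := by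
  induction s with
  | zero =>
    rw [pow_zero, shiftM_congr (fun j => stp A (j + 0) j) (fun _ => 1)
      (fun j _ => by simp [stp_refl]), shiftM_one]
  | succ s ih =>
    rw [pow_succ, ih, shiftM_mul hN s 1 _ A (fun k => stp_mod hN A hA s k)]
    apply shiftM_congr
    intro j _
    rw [show j + 1 + s = j + s + 1 from by omega, show j + (s + 1) = j + s + 1 from rfl,
      stp_succ_right]


lemma cyc_eq_shiftM {N n m : ℕ} (M : ℕ → Matrix (Fin n) (Fin m) ℝ) :
    cyc N M = shiftM N 1 M := rfl

lemma bdiag_eq_shiftM {N p n : ℕ} (M : ℕ → Matrix (Fin p) (Fin n) ℝ) :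
    bdiag N M = shiftM N 0 M := by
  ext a b
  simp only [bdiag, shiftM, Nat.add_zero, Nat.mod_eq_of_lt b.1.isLt, Fin.ext_iff]
  split_ifs with h <;> simp [h]


/-- The cycled inverse state matrix retains the 1-shift block-circulant
structure: `Ǎ - B̌ (Č Ǎ^(r-1) B̌)⁻¹ Č Ǎ^r` equals the cycled matrix of
`Γ_k = A_k - B_k (M_k^{(r)})⁻¹ C_{k+r} Φ(k+r, k)`. -/
theorem cycled_inverse_state_matrix {n m N : ℕ} (hN : 1 ≤ N)
    (A : ℕ → Matrix (Fin n) (Fin n) ℝ) (B : ℕ → Matrix (Fin n) (Fin m) ℝ)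
    (C : ℕ → Matrix (Fin m) (Fin n) ℝ) (r : ℕ) (hr : 1 ≤ r)
    (hA : ∀ k, A k = A (k % N)) (hB : ∀ k, B k = B (k % N))
    (hC : ∀ k, C k = C (k % N))
    (hM : ∀ k j : ℕ, 1 ≤ j → j < r → markov A B C k j = 0)
    (hMinv : ∀ k, IsUnit (markov A B C k r).det) :
    cyc N A - cyc N B * (bdiag N C * cyc N A ^ (r - 1) * cyc N B)⁻¹ *
        (bdiag N C * cyc N A ^ r) =
      cyc N (fun k =>
        A k - B k * (markov A B C k r)⁻¹ * (C (k + r) * stp A (k + r) k)) := by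
  have hN0 : 0 < N := hN
  -- periodicity of the combined block C (k + (r-1)) * Φ(k + (r-1), k)
  have hper2 : ∀ k : ℕ, C (k + (r - 1)) * stp A (k + (r - 1)) k
      = C (k % N + (r - 1)) * stp A (k % N + (r - 1)) (k % N) := by
    intro k
    rw [stp_mod hN0 A hA (r - 1) k]
    congr 1
    rw [hC (k + (r - 1)), hC (k % N + (r - 1)), mod_add_mod'']
  -- Č Ǎ^(r-1) B̌ is the r-shift with blocks the Markov parameters
  have hXeq : bdiag N C * cyc N A ^ (r - 1) * cyc N B
      = shiftM N r (fun j => markov A B C j r) := by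
    rw [bdiag_eq_shiftM, cyc_eq_shiftM, cyc_eq_shiftM, cyc_pow hN0 A hA (r - 1),
      shiftM_mul hN0 0 (r - 1) C _ hC, Nat.zero_add,
      shiftM_mul hN0 (r - 1) 1 _ B hper2,
      show r - 1 + 1 = r from by omega]
    apply shiftM_congr
    intro j _
    simp only [markov]
    rw [show j + 1 + (r - 1) = j + r from by omega]
  -- the inverse of that r-shift
  have hXinv : (shiftM N r (fun j => markov A B C j r))⁻¹
      = coShiftM N r (fun j => (markov A B C j r)⁻¹) := by
    apply Matrix.inv_eq_left_inv
    rw [coShiftM_mul_shiftM hN0 r,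
      shiftM_congr (fun j => (markov A B C j r)⁻¹ * markov A B C j r)
        (fun _ => (1 : Matrix (Fin m) (Fin m) ℝ))
        (fun j _ => Matrix.nonsing_inv_mul _ (hMinv j)),
      shiftM_one]
  -- Č Ǎ^r
  have hW : bdiag N C * cyc N A ^ r
      = shiftM N r (fun j => C (j + r) * stp A (j + r) j) := by
    rw [bdiag_eq_shiftM, cyc_eq_shiftM, cyc_pow hN0 A hA r,
      shiftM_mul hN0 0 r C _ hC, Nat.zero_add]
  rw [hXeq, hXinv, hW, Matrix.mul_assoc (cyc N B), coShiftM_mul_shiftM hN0 r,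
    cyc_eq_shiftM A, cyc_eq_shiftM B, cyc_eq_shiftM,
    shiftM_mul hN0 1 0 B _ hB, Nat.add_zero, shiftM_sub]
  apply shiftM_congr
  intro j _
  rw [Nat.add_zero j, ← Matrix.mul_assoc]
end

section
/- Fix N ≥ 1, r ≥ 1, and an N-periodic family of real matrices A_k ∈ ℝ^{n×n}, B_k ∈ ℝ^{n×m}, C_k ∈ ℝ^{m×n}, with cycled matrices Ǎ, B̌, Č. Define Φ(j,i) := A_{j−1}···A_i for j > i, Φ(i,i) := I, and M_k^{(j)} := C_{k+j} Φ(k+j, k+1) B_k for j ≥ 1 (indices mod N). Assume M_k^{(j)} = 0 for all k and all j with 1 ≤ j ≤ r−1, and that M_k^{(r)} is invertible for every k. Define Γ_k := A_k − B_k (M_k^{(r)})⁻¹ C_{k+r} Φ(k+r, k) and Φ_inv := Γ_{N−1} Γ_{N−2} ··· Γ_0. Then ρ(Φ_inv) < 1 if and only if ρ(Ǎ − B̌ (Č Ǎ^{r−1} B̌)⁻¹ Č Ǎ^r) < 1, where ρ denotes the spectral radius. -/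
open Matrix
open scoped ENNReal NNReal

/-!
The cycled matrix `Ǎ - B̌ (Č Ǎ^(r-1) B̌)⁻¹ Č Ǎ^r` is itself the cycled matrix `Γ̌` of the periodic
family `Γ_k`: every factor is a block-shift matrix, and block-shifts multiply by adding their
shifts. The `N`-th power of `Γ̌` is block diagonal with blocks `Γ_{k+N-1} ⋯ Γ_k`, the cyclic
rotations of `Φ_inv`; rotations `XY`, `YX` share their nonzero spectrum, so by spectral mapping
`ρ(Φ_inv) = ρ(Γ̌)^N`.
-/

open Function

theorem periodic_of_forall_eq_mod {β : Type*} {N : ℕ} {f : ℕ → β} (h : ∀ k, f k = f (k % N)) :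
    Periodic f N := fun k => by
  rw [h (k + N), Nat.add_mod_right, ← h k]

theorem Function.Periodic.matrix_mul {ι α a b c : Type*} [Add ι] [Fintype b] [Mul α]
    [AddCommMonoid α] {N : ι} {f : ι → Matrix a b α} {g : ι → Matrix b c α} (hf : Periodic f N)
    (hg : Periodic g N) : Periodic (fun k => f k * g k) N :=
  fun k => congrArg₂ (· * ·) (hf k) (hg k)

section ShiftBlock

variable {α : Type*} {N n m p : ℕ}

def shiftBlock [Zero α] (N t : ℕ) (M : ℕ → Matrix (Fin n) (Fin m) α) :
    Matrix (Fin N × Fin n) (Fin N × Fin m) α :=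
  fun p q => if (p.1 : ℕ) = ((q.1 : ℕ) + t) % N then M q.1 p.2 q.2 else 0

theorem cyc_eq_shiftBlock (M : ℕ → Matrix (Fin n) (Fin m) ℝ) : cyc N M = shiftBlock N 1 M := rfl

theorem shiftBlock_zero [Zero α] (M : ℕ → Matrix (Fin n) (Fin m) α) :
    shiftBlock N 0 M =
      reindex (Equiv.prodComm _ _) (Equiv.prodComm _ _) (blockDiagonal fun k : Fin N => M k) := by
  ext ⟨i, x⟩ ⟨j, y⟩
  simp only [shiftBlock, add_zero, Nat.mod_eq_of_lt j.2, reindex_apply, submatrix_apply,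
    Equiv.prodComm_symm, Equiv.prodComm_apply, Prod.swap_prod_mk, blockDiagonal_apply, Fin.val_inj]
  split_ifs with h <;> simp [h]

theorem bdiag_eq_shiftBlock (M : ℕ → Matrix (Fin p) (Fin n) ℝ) :
    bdiag N M = shiftBlock N 0 M := by
  ext q r
  simp only [bdiag, shiftBlock, add_zero, Nat.mod_eq_of_lt r.1.2, Fin.val_inj]
  split_ifs with h <;> simp [h]

theorem shiftBlock_zero_one [Semiring α] :
    shiftBlock N 0 (fun _ => (1 : Matrix (Fin n) (Fin n) α)) = 1 := by
  rw [shiftBlock_zero, ← Pi.one_def, blockDiagonal_one, reindex_apply, submatrix_one_equiv]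

theorem shiftBlock_congr [Zero α] {s t : ℕ} (hst : s % N = t % N)
    {M L : ℕ → Matrix (Fin n) (Fin m) α} (hML : ∀ k < N, M k = L k) :
    shiftBlock N s M = shiftBlock N t L := by
  ext q r
  rw [shiftBlock, shiftBlock, Nat.add_mod, hst, ← Nat.add_mod, hML _ r.1.2]

theorem shiftBlock_sub [AddGroup α] (t : ℕ) (M L : ℕ → Matrix (Fin n) (Fin m) α) :
    shiftBlock N t M - shiftBlock N t L = shiftBlock N t (fun k => M k - L k) := by
  ext q r
  simp only [shiftBlock, Matrix.sub_apply]
  split_ifs <;> simp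

theorem shiftBlock_mul [Semiring α] {M : ℕ → Matrix (Fin n) (Fin m) α} (hM : Periodic M N)
    (s t : ℕ) (L : ℕ → Matrix (Fin m) (Fin p) α) :
    shiftBlock N s M * shiftBlock N t L = shiftBlock N (s + t) (fun k => M (k + t) * L k) := by
  ext ⟨i, x⟩ ⟨j, z⟩
  have hl : ((j : ℕ) + t) % N < N := Nat.mod_lt _ j.pos
  rw [mul_apply, Fintype.sum_prod_type, Finset.sum_eq_single ⟨_, hl⟩]
  · simp only [shiftBlock, mul_apply, Nat.mod_add_mod, hM.map_mod_nat, add_right_comm, add_assoc]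
    split_ifs <;> simp
  · intro l _ hl
    refine Finset.sum_eq_zero fun y _ => ?_
    have hl' : (l : ℕ) ≠ ((j : ℕ) + t) % N := fun h => hl (Fin.ext h)
    simp [shiftBlock, hl']
  · simp

theorem shiftBlock_map {β : Type*} [Zero α] [Zero β] (f : α → β) (hf : f 0 = 0) (t : ℕ)
    (M : ℕ → Matrix (Fin n) (Fin m) α) :
    (shiftBlock N t M).map f = shiftBlock N t (fun k => (M k).map f) := by
  ext q r
  simp only [shiftBlock, Matrix.map_apply]
  split_ifs <;> simp [hf]

theorem isUnit_det_shiftBlock [CommRing α] (hN : 0 < N) {M : ℕ → Matrix (Fin n) (Fin n) α}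
    (hM : Periodic M N) (hdet : ∀ k, IsUnit (M k).det) (t : ℕ) : IsUnit (shiftBlock N t M).det := by
  obtain ⟨N, rfl⟩ := Nat.exists_eq_add_one_of_ne_zero hN.ne'
  have hinv : Periodic (fun k => (M (k + N * t))⁻¹) (N + 1) := (hM.add_const _).comp Inv.inv
  -- the shift `N * t` undoes the shift `t` modulo `N + 1`
  refine isUnit_det_of_left_inverse (B := shiftBlock _ (N * t) fun k => (M (k + N * t))⁻¹) ?_
  rw [shiftBlock_mul hinv, ← shiftBlock_zero_one]
  refine shiftBlock_congr (by simp [← Nat.succ_mul]) fun k _ => ?_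
  have hk : M (k + t * (N + 1)) = M k := by simpa using hM.nat_mul t k
  rw [show k + t + N * t = k + t * (N + 1) by ring, hk, nonsing_inv_mul _ (hdet k)]

end ShiftBlock

section Transition

variable {α : Type*} [Semiring α] {N n : ℕ} (A : ℕ → Matrix (Fin n) (Fin n) α)

def transition (j i : ℕ) : Matrix (Fin n) (Fin n) α :=
  ((List.range' i (j - i)).reverse.map A).prod

theorem stp_eq_transition (A : ℕ → Matrix (Fin n) (Fin n) ℝ) : stp A = transition A := rfl

theorem prodDesc_eq_transition (A : ℕ → Matrix (Fin n) (Fin n) ℝ) (N : ℕ) :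
    prodDesc A N = transition A N 0 := by
  simp [prodDesc, transition, List.range_eq_range']

theorem transition_self (i : ℕ) : transition A i i = 1 := by
  simp [transition]

theorem transition_succ {i j : ℕ} (h : i ≤ j) :
    transition A (j + 1) i = A j * transition A j i := by
  rw [transition, transition, Nat.sub_add_comm h, List.range'_1_concat, Nat.add_sub_cancel' h]
  simp

theorem transition_succ_self (i : ℕ) : transition A (i + 1) i = A i := by
  rw [transition_succ A le_rfl, transition_self, mul_one]

theorem transition_mul {i j l : ℕ} (hij : i ≤ j) (hjl : j ≤ l) :
    transition A l j * transition A j i = transition A l i := by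
  obtain ⟨a, rfl⟩ := Nat.exists_eq_add_of_le hij
  obtain ⟨b, rfl⟩ := Nat.exists_eq_add_of_le hjl
  rw [transition, transition, transition, Nat.add_sub_cancel_left, Nat.add_sub_cancel_left,
    add_assoc, Nat.add_sub_cancel_left, ← List.range'_append_1, List.reverse_append,
    List.map_append, List.prod_append]

theorem transition_add_period (hA : Periodic A N) (j i : ℕ) :
    transition A (j + N) (i + N) = transition A j i := by
  have hA' : A ∘ (N + ·) = A := funext fun k => by simpa [add_comm] using hA k
  rw [transition, transition, Nat.add_sub_add_right, add_comm i, ← List.map_add_range',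
    ← List.map_reverse, List.map_map, hA']

theorem periodic_transition (hA : Periodic A N) (t s : ℕ) :
    Periodic (fun k => transition A (k + t) (k + s)) N := fun k => by
  simp only [add_right_comm k N, transition_add_period A hA]

theorem shiftBlock_one_pow (hA : Periodic A N) (t : ℕ) :
    shiftBlock N 1 A ^ t = shiftBlock N t (fun k => transition A (k + t) k) := by
  induction t with
  | zero => simp only [pow_zero, add_zero, transition_self, shiftBlock_zero_one]
  | succ t ih =>
    rw [pow_succ, ih, shiftBlock_mul (by simpa using periodic_transition A hA t 0)]
    congr 1
    funext k
    rw [← transition_succ_self A k, transition_mul A (by omega) (by omega), add_right_comm,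
      add_assoc]

theorem transition_map {β : Type*} [Semiring β] (f : α →+* β) (j i : ℕ) :
    (transition A j i).map f = transition (fun k => (A k).map f) j i := by
  rw [← RingHom.mapMatrix_apply, transition, map_list_prod, List.map_map]
  rfl

end Transition

section SpectralRadius

variable {𝕜 A : Type*} [NormedField 𝕜] [Ring A] [Algebra 𝕜 A]

theorem spectralRadius_mul_comm (a b : A) :
    spectralRadius 𝕜 (a * b) = spectralRadius 𝕜 (b * a) := by
  have key : ∀ x y : A, spectralRadius 𝕜 (x * y) ≤ spectralRadius 𝕜 (y * x) := fun x y =>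
    iSup₂_le fun z hz => by
      rcases eq_or_ne z 0 with rfl | hz0
      · simp
      have hz' : z ∈ spectrum 𝕜 (y * x) \ {0} := by
        rw [← spectrum.nonzero_mul_comm]
        exact ⟨hz, hz0⟩
      exact le_iSup₂ (f := fun z (_ : z ∈ spectrum 𝕜 (y * x)) => (‖z‖₊ : ℝ≥0∞)) z hz'.1
  exact le_antisymm (key a b) (key b a)

theorem spectralRadius_pow [IsAlgClosed 𝕜] (a : A) {n : ℕ} (hn : 0 < n) :
    spectralRadius 𝕜 (a ^ n) = spectralRadius 𝕜 a ^ n := by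
  rw [spectralRadius, spectrum.map_pow_of_pos a hn, iSup_image, spectralRadius,
    ENNReal.iSup₂_pow_of_ne_zero _ hn.ne']
  simp [nnnorm_pow]

end SpectralRadius

section BlockDiagonal

variable {o m : Type*} [Fintype o] [DecidableEq o] [Fintype m] [DecidableEq m]

theorem spectrum_blockDiagonal {R : Type*} [CommRing R] (D : o → Matrix m m R) :
    spectrum R (blockDiagonal D) = ⋃ k, spectrum R (D k) := by
  ext z
  have hshift :
      algebraMap R _ z - blockDiagonal D = blockDiagonal fun k => algebraMap R _ z - D k := by
    simp only [Algebra.algebraMap_eq_smul_one]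
    rw [← blockDiagonal_one, ← blockDiagonal_smul, ← blockDiagonal_sub]
    rfl
  simp only [Set.mem_iUnion, spectrum.mem_iff, hshift, isUnit_iff_isUnit_det, det_blockDiagonal,
    IsUnit.prod_univ_iff, not_forall]

theorem spectralRadius_blockDiagonal {𝕜 : Type*} [NormedField 𝕜] (D : o → Matrix m m 𝕜) :
    spectralRadius 𝕜 (blockDiagonal D) = ⨆ k, spectralRadius 𝕜 (D k) := by
  rw [spectralRadius, spectrum_blockDiagonal, iSup_iUnion]
  rfl

end BlockDiagonal

section Monodromy

variable {𝕜 : Type*} [NormedField 𝕜] {N n : ℕ}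

theorem spectralRadius_shiftBlock_zero (M : ℕ → Matrix (Fin n) (Fin n) 𝕜) :
    spectralRadius 𝕜 (shiftBlock N 0 M) = ⨆ k : Fin N, spectralRadius 𝕜 (M k) := by
  rw [shiftBlock_zero, ← spectralRadius_blockDiagonal, spectralRadius, spectralRadius,
    ← coe_reindexAlgEquiv 𝕜 𝕜, AlgEquiv.spectrum_eq]

theorem spectralRadius_transition_add_period {G : ℕ → Matrix (Fin n) (Fin n) 𝕜}
    (hG : Periodic G N) {k : ℕ} (hk : k ≤ N) :
    spectralRadius 𝕜 (transition G (k + N) k) = spectralRadius 𝕜 (transition G N 0) := by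
  have hsplit : transition G (k + N) k = transition G k 0 * transition G N k := by
    rw [← transition_add_period G hG k 0, zero_add, transition_mul G hk (by omega)]
  rw [hsplit, spectralRadius_mul_comm, transition_mul G (Nat.zero_le k) hk]

theorem spectralRadius_transition_eq_pow [IsAlgClosed 𝕜] (hN : 0 < N)
    {G : ℕ → Matrix (Fin n) (Fin n) 𝕜} (hG : Periodic G N) :
    spectralRadius 𝕜 (transition G N 0) = spectralRadius 𝕜 (shiftBlock N 1 G) ^ N := by
  have : Nonempty (Fin N) := ⟨⟨0, hN⟩⟩
  rw [← spectralRadius_pow _ hN, shiftBlock_one_pow G hG,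
    shiftBlock_congr (t := 0) (by simp) fun _ _ => rfl, spectralRadius_shiftBlock_zero,
    iSup_congr fun k : Fin N => spectralRadius_transition_add_period hG k.is_le', ciSup_const]

end Monodromy

theorem specRad_prodDesc_eq_pow {N n : ℕ} (hN : 0 < N) {Γ : ℕ → Matrix (Fin n) (Fin n) ℝ}
    (hΓ : Periodic Γ N) : specRad (prodDesc Γ N) = specRad (cyc N Γ) ^ N := by
  rw [specRad, specRad, prodDesc_eq_transition, cyc_eq_shiftBlock,
    shiftBlock_map _ Complex.ofReal_zero]
  exact transition_map Γ Complex.ofRealHom N 0 ▸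
    spectralRadius_transition_eq_pow hN (hΓ.comp (Matrix.map · Complex.ofReal))

section Cycled

variable {n m N : ℕ} (A : ℕ → Matrix (Fin n) (Fin n) ℝ) (B : ℕ → Matrix (Fin n) (Fin m) ℝ)
    (C : ℕ → Matrix (Fin m) (Fin n) ℝ)

theorem periodic_markov (hA : Periodic A N) (hB : Periodic B N) (hC : Periodic C N) (r : ℕ) :
    Periodic (fun k => markov A B C k r) N :=
  ((hC.add_const r).matrix_mul (periodic_transition A hA r 1)).matrix_mul hB

theorem bdiag_mul_cyc_pow (hA : Periodic A N) (hC : Periodic C N) (t : ℕ) :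
    bdiag N C * cyc N A ^ t = shiftBlock N t (fun k => C (k + t) * transition A (k + t) k) := by
  rw [bdiag_eq_shiftBlock, cyc_eq_shiftBlock, shiftBlock_one_pow A hA, shiftBlock_mul hC, zero_add]

theorem bdiag_mul_cyc_pow_mul_cyc (hA : Periodic A N) (hC : Periodic C N) {r : ℕ} (hr : 1 ≤ r) :
    bdiag N C * cyc N A ^ (r - 1) * cyc N B = shiftBlock N r (fun k => markov A B C k r) := by
  have hCA : Periodic (fun k => C (k + (r - 1)) * transition A (k + (r - 1)) k) N :=
    (hC.add_const _).matrix_mul (periodic_transition A hA (r - 1) 0)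
  rw [bdiag_mul_cyc_pow A C hA hC, cyc_eq_shiftBlock, shiftBlock_mul hCA, Nat.sub_add_cancel hr]
  congr 1
  funext k
  rw [markov, show k + 1 + (r - 1) = k + r by omega]
  rfl

theorem cyc_sub_mul_inv_mul_eq_cyc (hN : 0 < N) (hA : Periodic A N) (hB : Periodic B N)
    (hC : Periodic C N) {r : ℕ} (hr : 1 ≤ r) (hdet : ∀ k, IsUnit (markov A B C k r).det) :
    cyc N A - cyc N B * (bdiag N C * cyc N A ^ (r - 1) * cyc N B)⁻¹ * (bdiag N C * cyc N A ^ r) =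
      cyc N (fun k => A k - B k * (markov A B C k r)⁻¹ * (C (k + r) * stp A (k + r) k)) := by
  have hmarkov := periodic_markov A B C hA hB hC r
  have hfactor : bdiag N C * cyc N A ^ r = shiftBlock N r (fun k => markov A B C k r) *
      shiftBlock N 0 (fun k => (markov A B C k r)⁻¹ * (C (k + r) * transition A (k + r) k)) := by
    rw [bdiag_mul_cyc_pow A C hA hC, shiftBlock_mul hmarkov, add_zero]
    congr 1
    funext k
    rw [add_zero, ← Matrix.mul_assoc, mul_nonsing_inv _ (hdet k), Matrix.one_mul]
  rw [bdiag_mul_cyc_pow_mul_cyc A B C hA hC hr, hfactor, Matrix.mul_assoc (cyc N B),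
    nonsing_inv_mul_cancel_left _ _ (isUnit_det_shiftBlock hN hmarkov hdet r), cyc_eq_shiftBlock,
    cyc_eq_shiftBlock, shiftBlock_mul hB, shiftBlock_sub, cyc_eq_shiftBlock]
  simp only [add_zero, Matrix.mul_assoc, stp_eq_transition]

end Cycled

theorem specRad_monodromy_iff_cycled_relative_degree_r_general {n m N : ℕ} (hN : 1 ≤ N)
    (A : ℕ → Matrix (Fin n) (Fin n) ℝ) (B : ℕ → Matrix (Fin n) (Fin m) ℝ)
    (C : ℕ → Matrix (Fin m) (Fin n) ℝ) (r : ℕ) (hr : 1 ≤ r)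
    (hA : ∀ k, A k = A (k % N)) (hB : ∀ k, B k = B (k % N))
    (hC : ∀ k, C k = C (k % N))
    (hMinv : ∀ k, IsUnit (markov A B C k r).det) :
    specRad (prodDesc (fun k =>
        A k - B k * (markov A B C k r)⁻¹ * (C (k + r) * stp A (k + r) k)) N) < 1 ↔
      specRad (cyc N A - cyc N B * (bdiag N C * cyc N A ^ (r - 1) * cyc N B)⁻¹ *
        (bdiag N C * cyc N A ^ r)) < 1 := by
  have hA' := periodic_of_forall_eq_mod hA
  have hB' := periodic_of_forall_eq_mod hB
  have hC' := periodic_of_forall_eq_mod hC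
  have hΓ :
      Periodic (fun k => A k - B k * (markov A B C k r)⁻¹ * (C (k + r) * stp A (k + r) k)) N :=
    hA'.sub ((hB'.matrix_mul ((periodic_markov A B C hA' hB' hC' r).comp Inv.inv)).matrix_mul
      ((hC'.add_const r).matrix_mul (periodic_transition A hA' r 0)))
  rw [cyc_sub_mul_inv_mul_eq_cyc A B C hN hA' hB' hC' hr hMinv, specRad_prodDesc_eq_pow hN hΓ,
    pow_lt_one_iff (by omega)]

/-- **Statement 19.** (Corollary, higher relative degree stability.) With
`Γ_k = A_k - B_k (M_k^{(r)})⁻¹ C_{k+r} Φ(k+r, k)` and `Φ_inv = Γ_{N-1} ⋯ Γ_0`,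
`ρ(Φ_inv) < 1 ↔ ρ(Ǎ - B̌ (Č Ǎ^(r-1) B̌)⁻¹ Č Ǎ^r) < 1`. -/
theorem specRad_monodromy_iff_cycled_relative_degree_r {n m N : ℕ} (hN : 1 ≤ N)
    (A : ℕ → Matrix (Fin n) (Fin n) ℝ) (B : ℕ → Matrix (Fin n) (Fin m) ℝ)
    (C : ℕ → Matrix (Fin m) (Fin n) ℝ) (r : ℕ) (hr : 1 ≤ r)
    (hA : ∀ k, A k = A (k % N)) (hB : ∀ k, B k = B (k % N))
    (hC : ∀ k, C k = C (k % N))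
    (hM : ∀ k j : ℕ, 1 ≤ j → j < r → markov A B C k j = 0)
    (hMinv : ∀ k, IsUnit (markov A B C k r).det) :
    specRad (prodDesc (fun k =>
        A k - B k * (markov A B C k r)⁻¹ * (C (k + r) * stp A (k + r) k)) N) < 1 ↔
      specRad (cyc N A - cyc N B * (bdiag N C * cyc N A ^ (r - 1) * cyc N B)⁻¹ *
        (bdiag N C * cyc N A ^ r)) < 1 :=
  specRad_monodromy_iff_cycled_relative_degree_r_general hN A B C r hr hA hB hC hMinv
end
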